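/- With f and 𝒞_t as above (f(x,t) = c(z) where x = z + t c(z), 𝒞_t = X_t(𝒞)), for each t > 0 we have f(x, t) = (1/t) ∫₀ˣ 𝟙_{𝒞_t}(s) dλ(s) for all x ∈ [0, 1+t]. In particular ∂f/∂x = 0 on the complement of 𝒞_t and ∂f/∂x = 1/t at each Lebesgue density point of 𝒞_t. -/

import Mathlib

open Set MeasureTheory Filter

/-- The Cantor function extended to all of `ℝ` by `0` on `(-∞,0]` and `1` on
`[1,∞)`: continuous, monotone, and locally constant off the Cantor set. -/
structure IsExtendedCantorFunction (c : ℝ → ℝ) : Prop where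
  continuous : Continuous c
  monotone : Monotone c
  eq_zero : ∀ z ≤ (0:ℝ), c z = 0
  eq_one : ∀ z, (1:ℝ) ≤ z → c z = 1
  locallyConstant : ∀ x ∈ Icc (0:ℝ) 1 \ cantorSet,
    ∃ U ∈ nhds x, ∀ y ∈ U, c y = c x

lemma myImage_add_const (k : ℝ) (A : Set ℝ) :
    (fun y => y + k) '' A = (fun y => y - k) ⁻¹' A := by
  ext y
  constructor
  · rintro ⟨a, ha, rfl⟩; simpa using ha
  · intro hy; exact ⟨y - k, hy, by ring⟩

lemma myVolume_image_add_const (k : ℝ) (A : Set ℝ) (hA : MeasurableSet A) :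
    MeasurableSet ((fun y => y + k) '' A) ∧
      volume ((fun y => y + k) '' A) = volume A := by
  rw [myImage_add_const]
  refine ⟨(measurable_id.sub measurable_const) hA, ?_⟩
  exact (measurePreserving_sub_right volume k).measure_preimage hA.nullMeasurableSet

lemma myVolume_preCantorSet (n : ℕ) :
    volume (preCantorSet n) ≤ ENNReal.ofReal ((2/3 : ℝ)^n) := by
  induction n with
  | zero => simp [Real.volume_Icc]
  | succ n ih =>
    have h1 : (· / 3) '' preCantorSet n = (· * 3) ⁻¹' preCantorSet n := by
      ext y
      constructor
      · rintro ⟨a, ha, rfl⟩; simpa [div_mul_cancel₀] using ha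
      · intro hy; exact ⟨y * 3, hy, by ring⟩
    have h2 : (fun x => (2 + x) / 3) '' preCantorSet n
        = (· * 3) ⁻¹' ((fun u => u - 2) ⁻¹' preCantorSet n) := by
      ext y
      constructor
      · rintro ⟨a, ha, rfl⟩
        simp only [mem_preimage]
        convert ha using 1
        ring
      · intro hy; exact ⟨y * 3 - 2, hy, by ring⟩
    have e2 : volume ((fun u => u - 2) ⁻¹' preCantorSet n) = volume (preCantorSet n) :=
      (measurePreserving_sub_right volume 2).measure_preimage
        (isClosed_preCantorSet n).measurableSet.nullMeasurableSet
    calc volume (preCantorSet (n+1))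
        ≤ volume ((· / 3) '' preCantorSet n) + volume ((fun x => (2 + x) / 3) '' preCantorSet n) :=
          measure_union_le _ _
      _ = ENNReal.ofReal |(3:ℝ)⁻¹| * volume (preCantorSet n)
          + ENNReal.ofReal |(3:ℝ)⁻¹| * volume (preCantorSet n) := by
            rw [h1, h2, Real.volume_preimage_mul_right (by norm_num : (3:ℝ) ≠ 0),
              Real.volume_preimage_mul_right (by norm_num : (3:ℝ) ≠ 0), e2]
      _ ≤ ENNReal.ofReal ((1:ℝ)/3) * ENNReal.ofReal ((2/3 : ℝ)^n)
          + ENNReal.ofReal ((1:ℝ)/3) * ENNReal.ofReal ((2/3 : ℝ)^n) := by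
            have : |(3:ℝ)⁻¹| = (1:ℝ)/3 := by norm_num
            rw [this]
            exact add_le_add (mul_le_mul_right ih _) (mul_le_mul_right ih _)
      _ = ENNReal.ofReal ((2/3 : ℝ)^(n+1)) := by
            rw [← ENNReal.ofReal_mul (by norm_num), ← ENNReal.ofReal_add (by positivity) (by positivity)]
            congr 1
            ring

lemma myVolume_cantorSet : volume cantorSet = 0 := by
  have ht : Tendsto (fun n : ℕ => ENNReal.ofReal ((2/3 : ℝ)^n)) atTop (nhds 0) := by
    have : Tendsto (fun n : ℕ => ((2:ℝ)/3)^n) atTop (nhds 0) :=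
      tendsto_pow_atTop_nhds_zero_of_lt_one (by norm_num) (by norm_num)
    simpa [Function.comp_def] using (ENNReal.continuous_ofReal.tendsto 0).comp this
  have hle : ∀ n : ℕ, volume cantorSet ≤ ENNReal.ofReal ((2/3 : ℝ)^n) := fun n =>
    le_trans (measure_mono (iInter_subset _ n)) (myVolume_preCantorSet n)
  exact le_zero_iff.mp (ge_of_tendsto' ht hle)

/-- `X = z + t c z` preserves Lebesgue measure on measurable subsets of the
complement of the Cantor set. -/
lemma key_measure {c : ℝ → ℝ} (hc : IsExtendedCantorFunction c) (t : ℝ)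
    (hinj : Function.Injective (fun z : ℝ => z + t * c z))
    (S : Set ℝ) (hS : MeasurableSet S) (hSC : ∀ u ∈ S, u ∉ cantorSet) :
    volume ((fun z => z + t * c z) '' S) = volume S := by
  classical
  set X : ℝ → ℝ := fun z => z + t * c z with hX
  -- countable family of sets on which c is constant
  obtain ⟨g, hg⟩ := exists_surjective_nat (ℚ × ℚ)
  let mid : ℚ × ℚ → ℝ := fun pq => ((pq.1 : ℝ) + (pq.2 : ℝ)) / 2
  let A : ℕ → Set ℝ := fun n =>
    match n with
    | 0 => Iic 0
    | 1 => Ici 1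
    | (m+2) =>
      if ∀ u ∈ Ioo (((g m).1 : ℝ)) (((g m).2 : ℝ)), c u = c (mid (g m))
      then Ioo (((g m).1 : ℝ)) (((g m).2 : ℝ)) else ∅
  have hA_meas : ∀ n, MeasurableSet (A n) := by
    intro n
    match n with
    | 0 => exact measurableSet_Iic
    | 1 => exact measurableSet_Ici
    | (m+2) =>
      simp only [A]
      split
      · exact measurableSet_Ioo
      · exact MeasurableSet.empty
  have hA_const : ∀ n, ∃ k : ℝ, ∀ u ∈ A n, X u = u + k := by
    intro n
    match n with
    | 0 => exact ⟨0, fun u hu => by simp [X, hc.eq_zero u hu]⟩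
    | 1 => exact ⟨t, fun u hu => by simp [X, hc.eq_one u hu]⟩
    | (m+2) =>
      by_cases h : ∀ u ∈ Ioo (((g m).1 : ℝ)) (((g m).2 : ℝ)), c u = c (mid (g m))
      · refine ⟨t * c (mid (g m)), fun u hu => ?_⟩
        have hu' : u ∈ Ioo (((g m).1 : ℝ)) (((g m).2 : ℝ)) := by
          simpa only [A, if_pos h] using hu
        simp [X, h u hu']
      · refine ⟨0, fun u hu => ?_⟩
        simp only [A, if_neg h] at hu
        exact absurd hu (notMem_empty u)
  have hA_cover : ∀ w, w ∉ cantorSet → w ∈ ⋃ n, A n := by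
    intro w hw
    rcases le_or_gt w 0 with h0 | h0
    · exact mem_iUnion.mpr ⟨0, h0⟩
    rcases le_or_gt 1 w with h1 | h1
    · exact mem_iUnion.mpr ⟨1, h1⟩
    -- w ∈ (0,1) \ cantorSet
    obtain ⟨U, hU, hUc⟩ := hc.locallyConstant w ⟨⟨h0.le, h1.le⟩, hw⟩
    obtain ⟨a, b, hab, habU⟩ := mem_nhds_iff_exists_Ioo_subset.mp hU
    obtain ⟨p, hp1, hp2⟩ := exists_rat_btwn hab.1
    obtain ⟨q, hq1, hq2⟩ := exists_rat_btwn hab.2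
    have hsub : Ioo ((p:ℝ)) ((q:ℝ)) ⊆ U := fun y hy =>
      habU ⟨hp1.trans hy.1, hy.2.trans hq2⟩
    have hpq : (p:ℝ) < (q:ℝ) := hp2.trans hq1
    have hmid : mid (p, q) ∈ Ioo ((p:ℝ)) ((q:ℝ)) := by
      constructor <;> (simp only [mid]; linarith)
    have hcond : ∀ u ∈ Ioo ((p:ℝ)) ((q:ℝ)), c u = c (mid (p, q)) := by
      intro u hu
      rw [hUc u (hsub hu), hUc _ (hsub hmid)]
    obtain ⟨m, hm⟩ := hg (p, q)
    refine mem_iUnion.mpr ⟨m + 2, ?_⟩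
    have : A (m + 2) = Ioo ((p:ℝ)) ((q:ℝ)) := by
      simp only [A, hm]
      exact if_pos hcond
    rw [this]
    exact ⟨hp2, hq1⟩
  -- disjointify
  set D : ℕ → Set ℝ := disjointed A with hD
  have hD_meas : ∀ n, MeasurableSet (D n) := MeasurableSet.disjointed hA_meas
  have hSD : S = ⋃ n, S ∩ D n := by
    rw [← inter_iUnion, iUnion_disjointed]
    exact (inter_eq_left.mpr fun u hu => hA_cover u (hSC u hu)).symm
  choose k hk using hA_const
  have himg : ∀ n, X '' (S ∩ D n) = (fun y => y + k n) '' (S ∩ D n) := by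
    intro n
    apply image_congr
    intro u hu
    exact hk n u (disjointed_subset A n hu.2)
  have hMeasEq : ∀ n, MeasurableSet (X '' (S ∩ D n)) ∧
      volume (X '' (S ∩ D n)) = volume (S ∩ D n) := by
    intro n
    rw [himg n]
    exact myVolume_image_add_const (k n) _ (hS.inter (hD_meas n))
  have hXS : X '' S = ⋃ n, X '' (S ∩ D n) := by
    conv_lhs => rw [hSD]
    exact image_iUnion
  rw [hXS, measure_iUnion ?_ (fun n => (hMeasEq n).1)]
  · rw [funext (fun n => (hMeasEq n).2)]
    rw [← measure_iUnion ?_ (fun n => hS.inter (hD_meas n))]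
    · rw [← hSD]
    · intro m n hmn
      exact ((disjoint_disjointed A) hmn).mono inter_subset_right inter_subset_right
  · intro m n hmn
    exact (Set.disjoint_image_of_injective hinj
      (((disjoint_disjointed A) hmn).mono inter_subset_right inter_subset_right))

/-- With `f(·,t)` defined implicitly by `f(z + t c(z), t) = c(z)`
and `𝒞_t = X_t(𝒞)`, for each `t > 0` one has
`f(x,t) = (1/t) ∫₀ˣ 𝟙_{𝒞_t}(s) dλ(s)` on `[0, 1+t]`; in particular
`∂f/∂x = 0` off `𝒞_t` and `∂f/∂x = 1/t` at each Lebesgue (density) point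
of `𝒞_t`. -/
theorem stmt7 {c : ℝ → ℝ} (hc : IsExtendedCantorFunction c) {t : ℝ} (ht : 0 < t)
    (f : ℝ → ℝ) (hf : ∀ z : ℝ, f (z + t * c z) = c z)
    (Ct : Set ℝ) (hCt : Ct = (fun z => z + t * c z) '' cantorSet) :
    (∀ x ∈ Icc (0:ℝ) (1 + t),
        f x = (1 / t) * ∫ s in (0:ℝ)..x, Ct.indicator (fun _ => (1:ℝ)) s) ∧
      (∀ x : ℝ, x ∉ Ct → HasDerivAt f 0 x) ∧
      (∀ x : ℝ,
        Tendsto (fun ε : ℝ =>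
            (∫ s in (x - ε)..(x + ε), |Ct.indicator (fun _ => (1:ℝ)) s - 1|) / (2 * ε))
          (nhdsWithin 0 (Ioi 0)) (nhds 0) →
        HasDerivAt f (1 / t) x) := by
  have hc0 : ∀ u : ℝ, 0 ≤ c u := by
    intro u
    rcases le_or_gt u 0 with h | h
    · rw [hc.eq_zero u h]
    · rw [← hc.eq_zero 0 le_rfl]; exact hc.monotone h.le
  have hc1 : ∀ u : ℝ, c u ≤ 1 := by
    intro u
    rcases le_or_gt 1 u with h | h
    · rw [hc.eq_one u h]
    · rw [← hc.eq_one 1 le_rfl]; exact hc.monotone h.le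
  set X : ℝ → ℝ := fun u => u + t * c u with hXdef
  have hXmono : StrictMono X := fun a b hab =>
    add_lt_add_of_lt_of_le hab (mul_le_mul_of_nonneg_left (hc.monotone hab.le) ht.le)
  have hXinj : Function.Injective X := hXmono.injective
  have hXcont : Continuous X := continuous_id.add (continuous_const.mul hc.continuous)
  have hXsurj : Function.Surjective X := by
    intro x
    have h1 : X (x - t) ≤ x := by have := hc1 (x - t); simp only [X]; nlinarith
    have h2 : x ≤ X x := by have := hc0 x; simp only [X]; nlinarith
    obtain ⟨u, _, hu⟩ := intermediate_value_Icc (by linarith : x - t ≤ x)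
      hXcont.continuousOn ⟨h1, h2⟩
    exact ⟨u, hu⟩
  set e : ℝ ≃o ℝ := StrictMono.orderIsoOfSurjective X hXmono hXsurj with hedef
  set z : ℝ → ℝ := fun x => e.symm x with hzdef
  have hXz : ∀ x, X (z x) = x := fun x =>
    StrictMono.orderIsoOfSurjective_self_symm_apply X hXmono hXsurj x
  have hz_eq : ∀ x, z x + t * c (z x) = x := hXz
  have hfz : ∀ x, f x = c (z x) := by
    intro x
    conv_lhs => rw [← hz_eq x]
    exact hf (z x)
  have hzmono : Monotone z := fun a b hab => e.symm.monotone hab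
  have hCt_closed : IsClosed Ct := by
    rw [hCt]; exact (isCompact_cantorSet.image hXcont).isClosed
  have hCt_meas : MeasurableSet Ct := hCt_closed.measurableSet
  have hz0 : z 0 = 0 := hXinj (by rw [hXz 0]; simp [X, hc.eq_zero 0 le_rfl])
  -- key measure identities
  have keyM : ∀ a b : ℝ, a ≤ b →
      volume (Icc a b \ Ct) = ENNReal.ofReal (z b - z a) := by
    intro a b hab
    have himg : Icc a b \ Ct = X '' (Icc (z a) (z b) \ cantorSet) := by
      rw [image_diff hXinj, hCt]
      congr 1
      have h1 : X '' Icc (z a) (z b) = e '' Icc (z a) (z b) := by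
        rw [hedef, StrictMono.coe_orderIsoOfSurjective]
      rw [h1, e.image_Icc, e.apply_symm_apply, e.apply_symm_apply]
    rw [himg, key_measure hc t hXinj _ (measurableSet_Icc.diff isClosed_cantorSet.measurableSet)
        (fun u hu => hu.2), measure_diff_null myVolume_cantorSet, Real.volume_Icc]
  have keyF : ∀ a b : ℝ, a ≤ b →
      t * (f b - f a) = (volume (Ct ∩ Icc a b)).toReal := by
    intro a b hab
    have h1 : volume (Icc a b ∩ Ct) + volume (Icc a b \ Ct) = volume (Icc a b) :=
      measure_inter_add_diff _ hCt_meas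
    rw [keyM a b hab, Real.volume_Icc, inter_comm] at h1
    have hfin : volume (Ct ∩ Icc a b) ≠ ⊤ :=
      ne_top_of_le_ne_top (by rw [Real.volume_Icc]; exact ENNReal.ofReal_ne_top)
        (measure_mono inter_subset_right)
    have hzab : z a ≤ z b := hzmono hab
    have h2 := congrArg ENNReal.toReal h1
    rw [ENNReal.toReal_add hfin ENNReal.ofReal_ne_top, ENNReal.toReal_ofReal (by linarith),
      ENNReal.toReal_ofReal (by linarith)] at h2
    have ea := hz_eq a
    have eb := hz_eq b
    rw [hfz a, hfz b]
    nlinarith [h2]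
  refine ⟨?_, ?_, ?_⟩
  · -- part 1
    rintro x ⟨hx0, _⟩
    have hF := keyF 0 x hx0
    have hf0 : f 0 = 0 := by rw [hfz 0, hz0, hc.eq_zero 0 le_rfl]
    have hInd : (∫ s in (0:ℝ)..x, Ct.indicator (fun _ => (1:ℝ)) s)
        = (volume (Ct ∩ Icc 0 x)).toReal := by
      rw [intervalIntegral.integral_of_le hx0, setIntegral_indicator hCt_meas, setIntegral_const]
      simp only [smul_eq_mul, mul_one]
      rw [measureReal_def]
      congr 1
      apply le_antisymm
      · exact measure_mono fun s hs => ⟨hs.2, Ioc_subset_Icc_self hs.1⟩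
      · calc volume (Ct ∩ Icc 0 x) ≤ volume (Ioc 0 x ∩ Ct ∪ {0}) := by
              apply measure_mono
              rintro s ⟨hsC, hs0, hsx⟩
              rcases eq_or_lt_of_le hs0 with h | h
              · exact Or.inr (by simp [← h])
              · exact Or.inl ⟨⟨h, hsx⟩, hsC⟩
          _ ≤ volume (Ioc 0 x ∩ Ct) + volume {0} := measure_union_le _ _
          _ = volume (Ioc 0 x ∩ Ct) := by simp
    rw [hInd, ← hF, hf0]
    field_simp
    simp
  · -- part 2
    intro x hx
    obtain ⟨δ, hδ, hball⟩ := Metric.isOpen_iff.mp hCt_closed.isOpen_compl x hx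
    have hconst : f =ᶠ[nhds x] fun _ => f x := by
      filter_upwards [Metric.ball_mem_nhds x hδ] with y hy
      rw [Real.ball_eq_Ioo] at hy hball
      have hsub : ∀ a b : ℝ, a ≤ b → x - δ < a → b < x + δ → Ct ∩ Icc a b = ∅ := by
        intro a b _ h1 h2
        apply eq_empty_of_forall_notMem
        rintro s ⟨hsC, hsa, hsb⟩
        exact hball ⟨by linarith, by linarith⟩ hsC
      rcases le_total x y with h | h
      · have hk := keyF x y h
        rw [hsub x y h (by linarith) hy.2] at hk
        simp only [measure_empty, ENNReal.toReal_zero] at hk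
        nlinarith
      · have hk := keyF y x h
        rw [hsub y x h hy.1 (by linarith)] at hk
        simp only [measure_empty, ENNReal.toReal_zero] at hk
        nlinarith
    exact (hasDerivAt_const x (f x)).congr_of_eventuallyEq hconst
  · -- part 3
    intro x H
    have hIntg : ∀ ε : ℝ, 0 < ε →
        (∫ s in (x - ε)..(x + ε), |Ct.indicator (fun _ => (1:ℝ)) s - 1|)
          = z (x + ε) - z (x - ε) := by
      intro ε hε
      have hle : x - ε ≤ x + ε := by linarith
      have heq : (fun s => |Ct.indicator (fun _ => (1:ℝ)) s - 1|)
          = (Ctᶜ).indicator (fun _ => (1:ℝ)) := by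
        funext s
        by_cases h : s ∈ Ct <;> simp [Set.indicator_apply, h]
      rw [heq, intervalIntegral.integral_of_le hle, setIntegral_indicator hCt_meas.compl,
        setIntegral_const]
      simp only [smul_eq_mul, mul_one]
      rw [measureReal_def]
      have hvol : volume (Ioc (x - ε) (x + ε) ∩ Ctᶜ) = volume (Icc (x - ε) (x + ε) \ Ct) := by
        apply le_antisymm
        · exact measure_mono fun s hs => ⟨Ioc_subset_Icc_self hs.1, hs.2⟩
        · calc volume (Icc (x - ε) (x + ε) \ Ct)
              ≤ volume (Ioc (x - ε) (x + ε) ∩ Ctᶜ ∪ {x - ε}) := by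
                apply measure_mono
                rintro s ⟨⟨hsa, hsb⟩, hsC⟩
                rcases eq_or_lt_of_le hsa with h | h
                · exact Or.inr (by simp [← h])
                · exact Or.inl ⟨⟨h, hsb⟩, hsC⟩
            _ ≤ volume (Ioc (x - ε) (x + ε) ∩ Ctᶜ) + volume {x - ε} := measure_union_le _ _
            _ = volume (Ioc (x - ε) (x + ε) ∩ Ctᶜ) := by simp
      rw [hvol, keyM _ _ hle,
        ENNReal.toReal_ofReal (by linarith [hzmono hle] : (0:ℝ) ≤ z (x + ε) - z (x - ε))]
    have H' : Tendsto (fun ε : ℝ => (z (x + ε) - z (x - ε)) / (2 * ε))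
        (nhdsWithin 0 (Ioi 0)) (nhds 0) := by
      apply Tendsto.congr' _ H
      filter_upwards [self_mem_nhdsWithin] with ε hε
      rw [hIntg ε hε]
    rw [hasDerivAt_iff_isLittleO, Asymptotics.isLittleO_iff]
    intro C hC
    have h2 : ∀ᶠ ε in nhdsWithin (0:ℝ) (Ioi 0),
        (z (x + ε) - z (x - ε)) / (2 * ε) < C * t / 2 :=
      H'.eventually (gt_mem_nhds (by positivity))
    obtain ⟨δ, hδpos, hδ⟩ := mem_nhdsGT_iff_exists_Ioo_subset.mp h2
    filter_upwards [Metric.ball_mem_nhds x hδpos] with y hy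
    rcases eq_or_ne y x with rfl | hyx
    · simp
    · have hε : (0:ℝ) < |y - x| := abs_pos.mpr (sub_ne_zero.mpr hyx)
      set ε := |y - x| with hεdef
      have hεδ : ε < δ := by rwa [Metric.mem_ball, Real.dist_eq] at hy
      have hlt : (z (x + ε) - z (x - ε)) / (2 * ε) < C * t / 2 := hδ ⟨hε, hεδ⟩
      have h1 : z (x + ε) - z (x - ε) < C * t * ε := by
        have h2ε : (0:ℝ) < 2 * ε := by linarith
        have := (div_lt_iff₀ h2ε).mp hlt
        nlinarith
      have hy1 : x - ε ≤ y := by linarith [neg_abs_le (y - x)]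
      have hy2 : y ≤ x + ε := by linarith [le_abs_self (y - x)]
      have hzb : |z y - z x| ≤ z (x + ε) - z (x - ε) := by
        have l1 := hzmono hy1
        have l2 := hzmono hy2
        have l3 := hzmono (by linarith : x - ε ≤ x)
        have l4 := hzmono (by linarith : x ≤ x + ε)
        rw [abs_le]; constructor <;> linarith
      have hkey : f y - f x - (y - x) * (1 / t) = -((z y - z x) / t) := by
        rw [hfz x, hfz y]
        have ha := hz_eq x
        have hb := hz_eq y
        field_simp
        nlinarith
      rw [smul_eq_mul, hkey, Real.norm_eq_abs, Real.norm_eq_abs, abs_neg, abs_div,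
        abs_of_pos ht]
      rw [div_le_iff₀ ht]
      calc |z y - z x| ≤ z (x + ε) - z (x - ε) := hzb
        _ ≤ C * t * ε := h1.le
        _ = C * |y - x| * t := by rw [hεdef]; ring
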